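/- Let q ∈ {1,2,...}, a > 1, b > q/2, c > 0, and f(x) = Φ(-x)^{-q} x^{a-1} e^{-bx² - cx} on (0,∞). Then the unique mode x_* of f satisfies (√(c² + 4(a-1)(2b-q)) - c)/(2(2b-q)) < x_* < (√(c² + 4(a-1+q)(2b-q)) - c)/(2(2b-q)). -/

import Mathlib

/-!
On `(0, ∞)` we have `f = exp L` with `L' = D`, where `D x = q r(x) + (a - 1) / x - 2 b x - c`
and `r = φ / Q` is the inverse Mills ratio of the Gaussian tail `Q(x) = Φ(-x)`.
Log-concavity of `Q` means that `r(x) - x` is strictly decreasing, so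
`D x = q (r(x) - x) + (a - 1) / x - (2 b - q) x - c` is strictly decreasing on `(0, ∞)` and a zero
of `D` is the unique maximiser of `f`.
Gordon's inequality `x < r(x) < x + 1 / x` squeezes `D` strictly between
`(a - 1) / x - (2 b - q) x - c` and `(a - 1 + q) / x - (2 b - q) x - c`, whose positive zeros are
the two bounds, so `D` changes sign between them.

Both Gordon inequalities and the log-concavity inequality `φ² - x φ Q < Q²` are proved the same
way: the difference of the two sides tends to `0` at `+∞`, and its derivative is negative by the
inequality proved before it.
-/

open MeasureTheory Real Set

/-- The standard normal cumulative distribution function. -/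
noncomputable def stdNormalCDF (x : ℝ) : ℝ :=
  ∫ u in Set.Iio x, (Real.sqrt (2 * Real.pi))⁻¹ * Real.exp (-u ^ 2 / 2)

open Filter Topology

lemma pos_of_hasDerivAt_neg_of_tendsto_zero {F F' : ℝ → ℝ} (hF : ∀ x, HasDerivAt F (F' x) x)
    (hF' : ∀ x, F' x < 0) (hlim : Tendsto F atTop (𝓝 0)) (x : ℝ) : 0 < F x := by
  have hanti : StrictAnti F := strictAnti_of_hasDerivAt_neg hF hF'
  exact (hanti.antitone.le_of_tendsto hlim (x + 1)).trans_lt (hanti (lt_add_one x))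

lemma StrictAntiOn.lt_of_hasDerivAt_of_eq_zero {L D : ℝ → ℝ} {s : Set ℝ}
    (hD : StrictAntiOn D s) (hs : s.OrdConnected) (hL : ∀ x ∈ s, HasDerivAt L (D x) x)
    {x₀ y : ℝ} (hx₀ : x₀ ∈ s) (h₀ : D x₀ = 0) (hy : y ∈ s) (hne : y ≠ x₀) : L y < L x₀ := by
  have hslope {u v : ℝ} (hu : u ∈ s) (hv : v ∈ s) (huv : u < v) :
      ∃ ξ ∈ Ioo u v, D ξ = (L v - L u) / (v - u) :=
    exists_hasDerivAt_eq_slope L D huv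
      (HasDerivAt.continuousOn fun x hx => hL x (hs.out hu hv hx))
      fun x hx => hL x (hs.out hu hv (Ioo_subset_Icc_self hx))
  rcases hne.lt_or_gt with hlt | hgt
  · obtain ⟨ξ, hξ, hDξ⟩ := hslope hy hx₀ hlt
    have : 0 < D ξ := h₀ ▸ hD (hs.out hy hx₀ (Ioo_subset_Icc_self hξ)) hx₀ hξ.2
    rw [hDξ, div_pos_iff_of_pos_right (sub_pos.2 hlt)] at this
    linarith
  · obtain ⟨ξ, hξ, hDξ⟩ := hslope hx₀ hy hgt
    have : D ξ < 0 := h₀ ▸ hD hx₀ (hs.out hx₀ hy (Ioo_subset_Icc_self hξ)) hξ.1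
    rw [hDξ, div_neg_iff] at this
    rcases this with h | h <;> linarith [h.1, h.2]

noncomputable def stdNormalPDF (x : ℝ) : ℝ := (√(2 * π))⁻¹ * exp (-x ^ 2 / 2)

lemma stdNormalPDF_pos (x : ℝ) : 0 < stdNormalPDF x := by
  unfold stdNormalPDF; positivity

lemma stdNormalPDF_neg (x : ℝ) : stdNormalPDF (-x) = stdNormalPDF x := by
  simp [stdNormalPDF]

lemma continuous_stdNormalPDF : Continuous stdNormalPDF := by
  unfold stdNormalPDF; fun_prop

lemma integrable_stdNormalPDF : Integrable stdNormalPDF := by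
  refine ((integrable_exp_neg_mul_sq one_half_pos).const_mul (√(2 * π))⁻¹).congr
    (.of_forall fun x => ?_)
  simp only [stdNormalPDF]; ring_nf

lemma hasDerivAt_stdNormalPDF (x : ℝ) : HasDerivAt stdNormalPDF (-x * stdNormalPDF x) x := by
  have h : HasDerivAt (fun u : ℝ => -u ^ 2 / 2) (-x) x :=
    ((hasDerivAt_pow 2 x).neg.div_const 2).congr_deriv (by ring)
  exact (h.exp.const_mul _).congr_deriv (by simp only [stdNormalPDF]; ring)

lemma tendsto_pow_mul_stdNormalPDF_atTop (k : ℕ) :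
    Tendsto (fun x => x ^ k * stdNormalPDF x) atTop (𝓝 0) := by
  have := ((tendsto_rpow_abs_mul_exp_neg_mul_sq_cocompact one_half_pos k).mono_left
    atTop_le_cocompact).const_mul (√(2 * π))⁻¹
  rw [mul_zero] at this
  refine this.congr' ?_
  filter_upwards [eventually_ge_atTop 0] with x hx
  simp only [stdNormalPDF, abs_of_nonneg hx, rpow_natCast]; ring_nf

noncomputable def stdNormalTail (x : ℝ) : ℝ := ∫ u in Ioi x, stdNormalPDF u

lemma stdNormalCDF_neg (x : ℝ) : stdNormalCDF (-x) = stdNormalTail x := by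
  rw [stdNormalCDF, setIntegral_congr_set Iio_ae_eq_Iic, ← neg_neg x, ← integral_comp_neg_Ioi]
  simp only [neg_neg]
  exact setIntegral_congr_fun measurableSet_Ioi fun u _ => stdNormalPDF_neg u

lemma stdNormalTail_pos (x : ℝ) : 0 < stdNormalTail x := by
  rw [stdNormalTail, setIntegral_pos_iff_support_of_nonneg_ae
    (.of_forall fun u => (stdNormalPDF_pos u).le) integrable_stdNormalPDF.integrableOn]
  simp [Function.support_eq_univ fun u => (stdNormalPDF_pos u).ne']

lemma hasDerivAt_stdNormalTail (x : ℝ) :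
    HasDerivAt stdNormalTail (-stdNormalPDF x) x := by
  have h : stdNormalTail = fun y => stdNormalTail 0 - ∫ u in (0 : ℝ)..y, stdNormalPDF u := by
    ext y
    rw [stdNormalTail, stdNormalTail, ← intervalIntegral.integral_Ioi_sub_Ioi'
      integrable_stdNormalPDF.integrableOn integrable_stdNormalPDF.integrableOn, sub_sub_cancel]
  rw [h]
  exact ((continuous_stdNormalPDF.integral_hasStrictDerivAt 0 x).hasDerivAt).const_sub _

lemma integral_Ioi_mul_stdNormalPDF {x : ℝ} (hx : 0 ≤ x) :
    ∫ u in Ioi x, u * stdNormalPDF u = stdNormalPDF x := by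
  have h := integral_Ioi_of_hasDerivAt_of_nonneg' (g := fun u => -stdNormalPDF u)
    (fun u _ => (hasDerivAt_stdNormalPDF u).neg.congr_deriv (by ring))
    (fun u hu => mul_nonneg (hx.trans hu.le) (stdNormalPDF_pos u).le)
    (by simpa using (tendsto_pow_mul_stdNormalPDF_atTop 0).neg)
  simpa using h

lemma mul_stdNormalTail_le {x : ℝ} (hx : 0 ≤ x) : x * stdNormalTail x ≤ stdNormalPDF x := by
  rw [← integral_Ioi_mul_stdNormalPDF hx, stdNormalTail, ← integral_const_mul]
  refine setIntegral_mono_on (integrable_stdNormalPDF.const_mul x).integrableOn ?_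
    measurableSet_Ioi fun u hu => mul_le_mul_of_nonneg_right (le_of_lt hu) (stdNormalPDF_pos u).le
  exact integrableOn_Ioi_deriv_of_nonneg' (g := fun u => -stdNormalPDF u)
    (fun u _ => (hasDerivAt_stdNormalPDF u).neg.congr_deriv (by ring))
    (fun u hu => mul_nonneg (hx.trans hu.le) (stdNormalPDF_pos u).le)
    (by simpa using (tendsto_pow_mul_stdNormalPDF_atTop 0).neg)

lemma tendsto_pow_mul_stdNormalTail_atTop (k : ℕ) :
    Tendsto (fun x => x ^ k * stdNormalTail x) atTop (𝓝 0) := by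
  refine tendsto_of_tendsto_of_tendsto_of_le_of_le' tendsto_const_nhds
    (tendsto_pow_mul_stdNormalPDF_atTop k) ?_ ?_
  · filter_upwards [eventually_ge_atTop 0] with x hx
    exact mul_nonneg (by positivity) (stdNormalTail_pos x).le
  · filter_upwards [eventually_ge_atTop 1] with x hx
    have hQ := stdNormalTail_pos x
    calc x ^ k * stdNormalTail x ≤ x ^ k * (x * stdNormalTail x) := by gcongr; nlinarith
      _ ≤ x ^ k * stdNormalPDF x := by gcongr; exact mul_stdNormalTail_le (by linarith)

lemma mul_stdNormalTail_lt (x : ℝ) : x * stdNormalTail x < stdNormalPDF x := by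
  have hderiv (y : ℝ) : HasDerivAt (fun y => stdNormalPDF y - y * stdNormalTail y)
      (-stdNormalTail y) y :=
    ((hasDerivAt_stdNormalPDF y).sub ((hasDerivAt_id' y).mul
      (hasDerivAt_stdNormalTail y))).congr_deriv (by ring)
  have hlim : Tendsto (fun y => stdNormalPDF y - y * stdNormalTail y) atTop (𝓝 0) := by
    simpa using (tendsto_pow_mul_stdNormalPDF_atTop 0).sub (tendsto_pow_mul_stdNormalTail_atTop 1)
  have := pos_of_hasDerivAt_neg_of_tendsto_zero hderiv
    (fun y => neg_neg_of_pos (stdNormalTail_pos y)) hlim x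
  linarith

lemma mul_stdNormalPDF_lt (x : ℝ) : x * stdNormalPDF x < (x ^ 2 + 1) * stdNormalTail x := by
  have hderiv (y : ℝ) : HasDerivAt (fun y => (y ^ 2 + 1) * stdNormalTail y - y * stdNormalPDF y)
      (2 * (y * stdNormalTail y - stdNormalPDF y)) y :=
    ((((hasDerivAt_pow 2 y).add_const 1).mul (hasDerivAt_stdNormalTail y)).sub
      ((hasDerivAt_id' y).mul (hasDerivAt_stdNormalPDF y))).congr_deriv (by ring)
  have hlim : Tendsto (fun y => (y ^ 2 + 1) * stdNormalTail y - y * stdNormalPDF y)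
      atTop (𝓝 0) := by
    simpa [add_mul] using ((tendsto_pow_mul_stdNormalTail_atTop 2).add
      (tendsto_pow_mul_stdNormalTail_atTop 0)).sub (tendsto_pow_mul_stdNormalPDF_atTop 1)
  have := pos_of_hasDerivAt_neg_of_tendsto_zero hderiv
    (fun y => by linarith [mul_stdNormalTail_lt y]) hlim x
  linarith

lemma stdNormalPDF_sq_sub_lt (x : ℝ) :
    stdNormalPDF x ^ 2 - x * stdNormalPDF x * stdNormalTail x < stdNormalTail x ^ 2 := by
  set F := fun y => stdNormalTail y ^ 2 + y * stdNormalPDF y * stdNormalTail y - stdNormalPDF y ^ 2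
  have hderiv (y : ℝ) : HasDerivAt F
      (-(stdNormalPDF y * ((y ^ 2 + 1) * stdNormalTail y - y * stdNormalPDF y))) y :=
    ((((hasDerivAt_stdNormalTail y).pow 2).add (((hasDerivAt_id' y).mul
      (hasDerivAt_stdNormalPDF y)).mul (hasDerivAt_stdNormalTail y))).sub
      ((hasDerivAt_stdNormalPDF y).pow 2)).congr_deriv (by simp only [Pi.mul_apply]; ring)
  have hlim : Tendsto F atTop (𝓝 0) := by
    simpa [F, mul_assoc] using (((tendsto_pow_mul_stdNormalTail_atTop 0).pow 2).add
      ((tendsto_pow_mul_stdNormalPDF_atTop 1).mul (tendsto_pow_mul_stdNormalTail_atTop 0))).sub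
      ((tendsto_pow_mul_stdNormalPDF_atTop 0).pow 2)
  have := pos_of_hasDerivAt_neg_of_tendsto_zero hderiv (fun y => neg_neg_of_pos
    (mul_pos (stdNormalPDF_pos y) (sub_pos.2 (mul_stdNormalPDF_lt y)))) hlim x
  linarith

noncomputable def invMillsRatio (x : ℝ) : ℝ := stdNormalPDF x / stdNormalTail x

lemma lt_invMillsRatio (x : ℝ) : x < invMillsRatio x :=
  (lt_div_iff₀ (stdNormalTail_pos x)).2 (mul_stdNormalTail_lt x)

lemma invMillsRatio_lt {x : ℝ} (hx : 0 < x) : invMillsRatio x < x + x⁻¹ := by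
  rw [invMillsRatio, div_lt_iff₀ (stdNormalTail_pos x), ← mul_lt_mul_iff_of_pos_left hx]
  calc x * stdNormalPDF x < (x ^ 2 + 1) * stdNormalTail x := mul_stdNormalPDF_lt x
    _ = x * ((x + x⁻¹) * stdNormalTail x) := by field_simp

lemma hasDerivAt_invMillsRatio (x : ℝ) :
    HasDerivAt invMillsRatio (invMillsRatio x * (invMillsRatio x - x)) x := by
  have hQ := (stdNormalTail_pos x).ne'
  exact ((hasDerivAt_stdNormalPDF x).div (hasDerivAt_stdNormalTail x) hQ).congr_deriv
    (by simp only [invMillsRatio]; field_simp; ring)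

@[fun_prop]
lemma continuous_invMillsRatio : Continuous invMillsRatio :=
  continuous_iff_continuousAt.2 fun x => (hasDerivAt_invMillsRatio x).continuousAt

lemma strictAnti_invMillsRatio_sub_id : StrictAnti fun x => invMillsRatio x - x := by
  refine strictAnti_of_hasDerivAt_neg
    (fun x => (hasDerivAt_invMillsRatio x).sub (hasDerivAt_id' x)) fun x => ?_
  have hQ := stdNormalTail_pos x
  have h : invMillsRatio x * (invMillsRatio x - x) < 1 := by
    rw [invMillsRatio, div_sub' hQ.ne', div_mul_div_comm, div_lt_one (by positivity)]
    linarith [stdNormalPDF_sq_sub_lt x]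
  linarith

namespace ModeBound

/-- The positive root of `B * x ^ 2 + c * x = d`. -/
noncomputable def positiveRoot (B c d : ℝ) : ℝ := (√(c ^ 2 + 4 * d * B) - c) / (2 * B)

section PositiveRoot

variable {B c d : ℝ}

lemma positiveRoot_pos (hB : 0 < B) (hd : 0 < d) : 0 < positiveRoot B c d :=
  div_pos (sub_pos.2 (lt_sqrt_of_sq_lt (by nlinarith))) (by positivity)

lemma div_positiveRoot (hB : 0 < B) (hd : 0 < d) :
    d / positiveRoot B c d = B * positiveRoot B c d + c := by
  rw [div_eq_iff (positiveRoot_pos hB hd).ne', positiveRoot]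
  have hs := sq_sqrt (show 0 ≤ c ^ 2 + 4 * d * B by nlinarith)
  generalize √(c ^ 2 + 4 * d * B) = s at hs ⊢
  field_simp
  linear_combination (-1) * hs

end PositiveRoot

noncomputable def logDensity (q a b c x : ℝ) : ℝ :=
  -q * log (stdNormalTail x) + (a - 1) * log x - b * x ^ 2 - c * x

noncomputable def score (q a b c x : ℝ) : ℝ :=
  q * invMillsRatio x + (a - 1) / x - 2 * b * x - c

section Score

variable {q a b c x : ℝ}

lemma exp_logDensity (hx : 0 < x) : exp (logDensity q a b c x) =
    stdNormalCDF (-x) ^ (-q) * x ^ (a - 1) * exp (-b * x ^ 2 - c * x) := by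
  rw [stdNormalCDF_neg, rpow_def_of_pos (stdNormalTail_pos x), rpow_def_of_pos hx,
    ← exp_add, ← exp_add, logDensity]
  ring_nf

lemma hasDerivAt_logDensity (hx : 0 < x) :
    HasDerivAt (logDensity q a b c) (score q a b c x) x := by
  have hQ := (stdNormalTail_pos x).ne'
  have := (((((hasDerivAt_stdNormalTail x).log hQ).const_mul (-q)).add
    ((hasDerivAt_log hx.ne').const_mul (a - 1))).sub ((hasDerivAt_pow 2 x).const_mul b)).sub
    ((hasDerivAt_id' x).const_mul c)
  exact this.congr_deriv (by simp only [score, invMillsRatio]; field_simp; ring)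

lemma continuousOn_score : ContinuousOn (score q a b c) (Ioi 0) := by
  unfold score
  fun_prop (disch := exact fun x hx => ne_of_gt hx)

lemma score_eq (q a b c x : ℝ) : score q a b c x =
    q * (invMillsRatio x - x) + ((a - 1) / x - (2 * b - q) * x - c) := by
  rw [score]; ring

lemma strictAntiOn_score (hq : 0 ≤ q) (ha : 1 ≤ a) (hb : q < 2 * b) :
    StrictAntiOn (score q a b c) (Ioi 0) := by
  intro x hx y hy hxy
  rw [score_eq, score_eq]
  have hmills := mul_le_mul_of_nonneg_left (strictAnti_invMillsRatio_sub_id hxy).le hq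
  have hinv : (a - 1) / y ≤ (a - 1) / x := div_le_div_of_nonneg_left (by linarith) hx hxy.le
  have hlin := mul_lt_mul_of_pos_left hxy (sub_pos.2 hb)
  linarith

lemma sub_lt_score (hq : 0 < q) :
    (a - 1) / x - (2 * b - q) * x - c < score q a b c x := by
  rw [score_eq]
  linarith [mul_pos hq (sub_pos.2 (lt_invMillsRatio x))]

lemma score_lt (hq : 0 < q) (hx : 0 < x) :
    score q a b c x < (a - 1 + q) / x - (2 * b - q) * x - c := by
  have h := mul_lt_mul_of_pos_left (invMillsRatio_lt hx) hq
  rw [score, add_div, div_eq_mul_inv q]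
  linarith

lemma exists_score_eq_zero (hq : 0 < q) (ha : 1 < a) (hb : q < 2 * b) :
    ∃ x ∈ Ioo (positiveRoot (2 * b - q) c (a - 1)) (positiveRoot (2 * b - q) c (a - 1 + q)),
      score q a b c x = 0 := by
  have hB : 0 < 2 * b - q := sub_pos.2 hb
  set xL := positiveRoot (2 * b - q) c (a - 1)
  set xU := positiveRoot (2 * b - q) c (a - 1 + q)
  have hxL : 0 < xL := positiveRoot_pos hB (by linarith)
  have hxU : 0 < xU := positiveRoot_pos hB (by linarith)
  have hL : 0 < score q a b c xL :=
    calc 0 = (a - 1) / xL - (2 * b - q) * xL - c := by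
          rw [div_positiveRoot hB (by linarith)]; ring
      _ < score q a b c xL := sub_lt_score hq
  have hU : score q a b c xU < 0 :=
    calc score q a b c xU < (a - 1 + q) / xU - (2 * b - q) * xU - c := score_lt hq hxU
      _ = 0 := by rw [div_positiveRoot hB (by linarith)]; ring
  have hlt : xL < xU := ((strictAntiOn_score hq.le ha.le hb).lt_iff_gt hxU hxL).1 (hU.trans hL)
  exact intermediate_value_Ioo' hlt.le (continuousOn_score.mono fun x hx => hxL.trans_le hx.1)
    ⟨hU, hL⟩

end Score

end ModeBound

theorem mode_bound_b_gt_half_q_general (q : ℕ) (hq : 1 ≤ q) (a b c : ℝ)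
    (ha : 1 < a) (hb : (q : ℝ) / 2 < b)
    (f : ℝ → ℝ)
    (hf : ∀ x : ℝ, f x = (stdNormalCDF (-x)) ^ (-(q : ℝ)) * x ^ (a - 1) *
        Real.exp (-b * x ^ 2 - c * x)) :
    ∃ xs : ℝ, (xs ∈ Set.Ioi (0 : ℝ) ∧ IsMaxOn f (Set.Ioi 0) xs ∧
        (Real.sqrt (c ^ 2 + 4 * (a - 1) * (2 * b - q)) - c) / (2 * (2 * b - q)) < xs ∧
        xs < (Real.sqrt (c ^ 2 + 4 * (a - 1 + q) * (2 * b - q)) - c) / (2 * (2 * b - q))) ∧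
      ∀ y ∈ Set.Ioi (0 : ℝ), IsMaxOn f (Set.Ioi 0) y → y = xs := by
  have hq' : (0 : ℝ) < q := by exact_mod_cast hq
  have hb' : (q : ℝ) < 2 * b := by linarith
  obtain ⟨xs, ⟨hL, hU⟩, hxs⟩ := ModeBound.exists_score_eq_zero (c := c) hq' ha hb'
  have hxs₀ : 0 < xs := (ModeBound.positiveRoot_pos (by linarith) (by linarith)).trans hL
  have hlt : ∀ y ∈ Ioi 0, y ≠ xs → f y < f xs := fun y hy hne => by
    rw [hf, hf, ← ModeBound.exp_logDensity hy, ← ModeBound.exp_logDensity hxs₀, exp_lt_exp]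
    exact (ModeBound.strictAntiOn_score hq'.le ha.le hb').lt_of_hasDerivAt_of_eq_zero
      ordConnected_Ioi (fun x hx => ModeBound.hasDerivAt_logDensity hx) hxs₀ hxs hy hne
  have hmax : IsMaxOn f (Ioi 0) xs := isMaxOn_iff.2 fun y hy => by
    rcases eq_or_ne y xs with rfl | hne
    exacts [le_rfl, (hlt y hy hne).le]
  refine ⟨xs, ⟨hxs₀, hmax, hL, hU⟩, fun y hy hy_max => ?_⟩
  by_contra hne
  exact (hlt y hy hne).not_ge (isMaxOn_iff.1 hy_max xs hxs₀)

/-- For `q ≥ 1`, `a > 1`, `b > q/2`, `c > 0`, the unique mode `x⋆` of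
`f(x) = Φ(-x)^{-q} x^{a-1} e^{-bx² - cx}` on `(0,∞)` satisfies
`(√(c² + 4(a-1)(2b-q)) - c)/(2(2b-q)) < x⋆ < (√(c² + 4(a-1+q)(2b-q)) - c)/(2(2b-q))`. -/
theorem mode_bound_b_gt_half_q (q : ℕ) (hq : 1 ≤ q) (a b c : ℝ)
    (ha : 1 < a) (hb : (q : ℝ) / 2 < b) (hc : 0 < c)
    (f : ℝ → ℝ)
    (hf : ∀ x : ℝ, f x = (stdNormalCDF (-x)) ^ (-(q : ℝ)) * x ^ (a - 1) *
        Real.exp (-b * x ^ 2 - c * x)) :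
    ∃ xs : ℝ, (xs ∈ Set.Ioi (0 : ℝ) ∧ IsMaxOn f (Set.Ioi 0) xs ∧
        (Real.sqrt (c ^ 2 + 4 * (a - 1) * (2 * b - q)) - c) / (2 * (2 * b - q)) < xs ∧
        xs < (Real.sqrt (c ^ 2 + 4 * (a - 1 + q) * (2 * b - q)) - c) / (2 * (2 * b - q))) ∧
      ∀ y ∈ Set.Ioi (0 : ℝ), IsMaxOn f (Set.Ioi 0) y → y = xs :=
  mode_bound_b_gt_half_q_general q hq a b c ha hb f hf
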